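/- arXiv:2303.05841 — 4 statements merged into one kernel-verified Lean document; each statement's English description precedes it below -/
import Mathlib

section
/- Let k ≥ 2 be an integer. There exists a constant C_k, depending only on k, such that for all real numbers a < b, all c > 0, all λ > 0, every smooth real-valued function φ on an open interval containing [a,b] with |φ^{(k)}(x)| ≥ c for all x ∈ (a,b), and every C¹ function ψ on [a,b], one has |∫_a^b e^{iλφ(x)} ψ(x) dx| ≤ C_k (cλ)^{−1/k} (|ψ(b)| + ∫_a^b |ψ′(x)| dx). -/
open Set intervalIntegral MeasureTheory Complex Topology Filter

namespace VdC

section helpers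
lemma norm_exp_I (r : ℝ) : ‖Complex.exp (Complex.I * (r : ℂ))‖ = 1 := by
  rw [Complex.norm_exp]; simp

lemma intervalIntegral_conj (f : ℝ → ℂ) (a b : ℝ) :
    ∫ x in a..b, (starRingEnd ℂ) (f x) = (starRingEnd ℂ) (∫ x in a..b, f x) := by
  simp only [intervalIntegral, ← integral_conj, map_sub]

lemma norm_integral_exp_le (f : ℝ → ℝ) (lam a b : ℝ) (hab : a ≤ b) :
    ‖∫ x in a..b, Complex.exp (Complex.I * ((lam * f x : ℝ) : ℂ))‖ ≤ b - a := by
  have := intervalIntegral.norm_integral_le_of_norm_le_const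
    (f := fun x => Complex.exp (Complex.I * ((lam * f x : ℝ) : ℂ))) (C := 1) (a := a) (b := b)
    (fun x _ => le_of_eq (norm_exp_I _))
  simpa [_root_.abs_of_nonneg (sub_nonneg.2 hab)] using this

lemma sub_le_of_hasDerivAt {a b c : ℝ} {m m' : ℝ → ℝ}
    (hd : ∀ x ∈ Icc a b, HasDerivAt m (m' x) x)
    (hc : ∀ x ∈ Icc a b, c ≤ m' x) :
    ∀ x ∈ Icc a b, ∀ y ∈ Icc a b, x ≤ y → c * (y - x) ≤ m y - m x := by
  intro x hx y hy hxy
  have hmono : MonotoneOn (fun t => m t - c * t) (Icc a b) := by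
    apply monotoneOn_of_deriv_nonneg (convex_Icc a b)
    · exact ContinuousOn.sub (fun t ht => ((hd t ht).continuousAt).continuousWithinAt)
        (continuous_const.mul continuous_id).continuousOn
    · intro t ht
      have ht' : t ∈ Icc a b := interior_subset ht
      exact (((hd t ht').sub ((hasDerivAt_id t).const_mul c)).differentiableAt).differentiableWithinAt
    · intro t ht
      have ht' : t ∈ Icc a b := interior_subset ht
      have h2 : HasDerivAt (fun t => m t - c * t) (m' t - c * 1) t :=
        (hd t ht').sub (by simpa using (hasDerivAt_id t).const_mul c)
      rw [h2.deriv]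
      have := hc t ht'
      nlinarith
  have := hmono hx hy hxy
  simp only at this
  nlinarith

lemma norm_integral_exp_neg (f : ℝ → ℝ) (lam a b : ℝ) :
    ‖∫ x in a..b, Complex.exp (Complex.I * ((lam * (-(f x)) : ℝ) : ℂ))‖
      = ‖∫ x in a..b, Complex.exp (Complex.I * ((lam * f x : ℝ) : ℂ))‖ := by
  have hpt : ∀ x : ℝ, Complex.exp (Complex.I * ((lam * f x : ℝ) : ℂ))
      = (starRingEnd ℂ) (Complex.exp (Complex.I * ((lam * (-(f x)) : ℝ) : ℂ))) := by
    intro x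
    rw [← Complex.exp_conj]
    congr 1
    rw [map_mul, Complex.conj_I, Complex.conj_ofReal]
    push_cast
    ring
  have h2 : (∫ x in a..b, Complex.exp (Complex.I * ((lam * f x : ℝ) : ℂ)))
      = (starRingEnd ℂ) (∫ x in a..b, Complex.exp (Complex.I * ((lam * (-(f x)) : ℝ) : ℂ))) := by
    rw [← intervalIntegral_conj]
    exact intervalIntegral.integral_congr (fun x _ => hpt x)
  rw [h2, RCLike.norm_conj]

lemma rpow_key {t : ℝ} (ht : 0 < t) {k : ℕ} (hk : 1 ≤ k) :
    (t * t ^ (-1 / ((k:ℝ)+1))) ^ (-1 / (k:ℝ)) = t ^ (-1 / ((k:ℝ)+1)) := by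
  have hk0 : (k:ℝ) ≠ 0 := Nat.cast_ne_zero.2 (by omega)
  have hk1 : (k:ℝ) + 1 ≠ 0 := by positivity
  have h1 : t * t ^ (-1 / ((k:ℝ)+1)) = t ^ (1 + (-1 / ((k:ℝ)+1))) := by
    rw [Real.rpow_add ht, Real.rpow_one]
  rw [h1, ← Real.rpow_mul ht.le]
  congr 1
  field_simp
  ring
end helpers

lemma base (a b : ℝ) (hab : a < b) (c lam : ℝ) (hc : 0 < c) (hlam : 0 < lam)
    (f g g' : ℝ → ℝ)
    (hf : ∀ x ∈ Icc a b, HasDerivAt f (g x) x)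
    (hg : ∀ x ∈ Icc a b, HasDerivAt g (g' x) x)
    (hg'c : ContinuousOn g' (Icc a b))
    (hgc : ∀ x ∈ Icc a b, c ≤ g x)
    (hsign : (∀ x ∈ Icc a b, 0 ≤ g' x) ∨ (∀ x ∈ Icc a b, g' x ≤ 0)) :
    ‖∫ x in a..b, Complex.exp (Complex.I * ((lam * f x : ℝ) : ℂ))‖ ≤ 3 / (c * lam) := by
  have huIcc : uIcc a b = Icc a b := uIcc_of_le hab.le
  set E : ℝ → ℂ := fun x => Complex.exp (Complex.I * ((lam * f x : ℝ) : ℂ)) with hE_def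
  set w : ℝ → ℂ := fun x => Complex.I * ((lam * g x : ℝ) : ℂ) with hw_def
  set h' : ℝ → ℂ := fun x => -(Complex.I * ((lam * g' x : ℝ) : ℂ)) / (w x) ^ 2 with hh'_def
  have hgpos : ∀ x ∈ Icc a b, 0 < g x := fun x hx => lt_of_lt_of_le hc (hgc x hx)
  have hw0 : ∀ x ∈ Icc a b, w x ≠ 0 := by
    intro x hx
    apply mul_ne_zero Complex.I_ne_zero
    rw [Complex.ofReal_ne_zero]
    have := hgpos x hx
    positivity
  have hE : ∀ x ∈ Icc a b, HasDerivAt E (E x * w x) x := by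
    intro x hx
    exact (((hf x hx).const_mul lam).ofReal_comp.const_mul Complex.I).cexp
  have hw : ∀ x ∈ Icc a b, HasDerivAt w (Complex.I * ((lam * g' x : ℝ) : ℂ)) x := by
    intro x hx
    exact ((hg x hx).const_mul lam).ofReal_comp.const_mul Complex.I
  have hh : ∀ x ∈ Icc a b, HasDerivAt (fun y => (w y)⁻¹) (h' x) x := by
    intro x hx
    have h1 := HasDerivAt.scomp (𝕜 := ℝ) x (hasDerivAt_inv (hw0 x hx)) (hw x hx)
    have h2 : HasDerivAt (fun y => (w y)⁻¹)
        ((Complex.I * ((lam * g' x : ℝ) : ℂ)) • (-(w x ^ 2)⁻¹)) x := h1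
    convert h2 using 1
    simp only [smul_eq_mul, hh'_def]
    field_simp
  have hgcont : ContinuousOn g (Icc a b) := fun x hx => ((hg x hx).continuousAt).continuousWithinAt
  have hwcont : ContinuousOn w (Icc a b) := by
    apply continuousOn_const.mul
    exact Complex.continuous_ofReal.comp_continuousOn (continuousOn_const.mul hgcont)
  have hEcont : ContinuousOn E (Icc a b) := fun x hx => ((hE x hx).continuousAt).continuousWithinAt
  have hh'cont : ContinuousOn h' (Icc a b) := by
    apply ContinuousOn.div
    · exact (continuousOn_const.mul
        (Complex.continuous_ofReal.comp_continuousOn (continuousOn_const.mul hg'c))).neg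
    · exact hwcont.pow 2
    · intro x hx; exact pow_ne_zero 2 (hw0 x hx)
  have hEw_int : IntervalIntegrable (fun x => E x * w x) MeasureTheory.volume a b := by
    apply ContinuousOn.intervalIntegrable
    rw [huIcc]; exact hEcont.mul hwcont
  have hh'_int : IntervalIntegrable h' MeasureTheory.volume a b := by
    apply ContinuousOn.intervalIntegrable; rw [huIcc]; exact hh'cont
  have key : (∫ x in a..b, E x) = ∫ x in a..b, (w x)⁻¹ * (E x * w x) := by
    apply intervalIntegral.integral_congr
    intro x hx
    rw [huIcc] at hx
    field_simp [hw0 x hx]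
  have ibp := intervalIntegral.integral_mul_deriv_eq_deriv_mul
    (u := fun y => (w y)⁻¹) (v := E) (u' := h') (v' := fun x => E x * w x)
    (fun x hx => hh x (huIcc ▸ hx)) (fun x hx => hE x (huIcc ▸ hx)) hh'_int hEw_int
  rw [key, ibp]
  -- norms
  have hnormw : ∀ x ∈ Icc a b, ‖w x‖ = lam * g x := by
    intro x hx
    simp only [hw_def, norm_mul, Complex.norm_I, one_mul, Complex.norm_real, Real.norm_eq_abs,
      abs_mul]
    rw [_root_.abs_of_nonneg hlam.le, _root_.abs_of_nonneg (hgpos x hx).le]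
  have hnormE : ∀ x, ‖E x‖ = 1 := fun x => norm_exp_I _
  have hinv : ∀ x ∈ Icc a b, ‖(w x)⁻¹‖ ≤ 1 / (c * lam) := by
    intro x hx
    rw [norm_inv, hnormw x hx, one_div]
    apply inv_anti₀ (by positivity)
    have := hgc x hx
    nlinarith
  have hmem_a : a ∈ Icc a b := ⟨le_refl a, hab.le⟩
  have hmem_b : b ∈ Icc a b := ⟨hab.le, le_refl b⟩
  -- bound on the remaining integral
  have hnormh' : ∀ x ∈ Icc a b, ‖h' x * E x‖ = |g' x| / (lam * g x ^ 2) := by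
    intro x hx
    rw [norm_mul, hnormE, mul_one, hh'_def]
    simp only [norm_div, norm_neg, norm_mul, Complex.norm_I, one_mul, Complex.norm_real,
      Real.norm_eq_abs, norm_pow]
    rw [hnormw x hx]
    rw [_root_.abs_of_nonneg hlam.le]
    have hgx : 0 < g x := hgpos x hx
    rw [mul_pow]
    field_simp
  have hAd : ∀ x ∈ Icc a b, HasDerivAt (fun y => -(lam * g y)⁻¹) (g' x / (lam * g x ^ 2)) x := by
    intro x hx
    have h1 : HasDerivAt (fun y => lam * g y) (lam * g' x) x := (hg x hx).const_mul lam
    have h2 := (h1.inv (by have := hgpos x hx; positivity)).neg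
    refine h2.congr_deriv ?_
    have hgx := hgpos x hx
    rw [neg_div, neg_neg, div_eq_div_iff (by positivity) (by positivity)]
    ring
  have hint_norm : IntervalIntegrable (fun x => |g' x| / (lam * g x ^ 2))
      MeasureTheory.volume a b := by
    apply ContinuousOn.intervalIntegrable
    rw [huIcc]
    exact (hg'c.abs).div (continuousOn_const.mul (hgcont.pow 2))
      (fun x hx => by have := hgpos x hx; positivity)
  have hint_sgn : IntervalIntegrable (fun x => g' x / (lam * g x ^ 2))
      MeasureTheory.volume a b := by
    apply ContinuousOn.intervalIntegrable
    rw [huIcc]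
    exact hg'c.div (continuousOn_const.mul (hgcont.pow 2))
      (fun x hx => by have := hgpos x hx; positivity)
  have hftc : (∫ x in a..b, g' x / (lam * g x ^ 2)) = (lam * g a)⁻¹ - (lam * g b)⁻¹ := by
    have := intervalIntegral.integral_eq_sub_of_hasDerivAt
      (f := fun y => -(lam * g y)⁻¹) (f' := fun x => g' x / (lam * g x ^ 2))
      (fun x hx => hAd x (huIcc ▸ hx)) hint_sgn
    rw [this]; ring
  have hJ : (∫ x in a..b, |g' x| / (lam * g x ^ 2)) ≤ 1 / (c * lam) := by
    have hbnd : (lam * g a)⁻¹ ≤ 1 / (c * lam) := by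
      rw [one_div]
      apply inv_anti₀ (by positivity)
      have := hgc a hmem_a; nlinarith
    have hbnd' : (lam * g b)⁻¹ ≤ 1 / (c * lam) := by
      rw [one_div]
      apply inv_anti₀ (by positivity)
      have := hgc b hmem_b; nlinarith
    have hpa : 0 < (lam * g a)⁻¹ := by have := hgpos a hmem_a; positivity
    have hpb : 0 < (lam * g b)⁻¹ := by have := hgpos b hmem_b; positivity
    rcases hsign with hpos | hneg
    · have : (∫ x in a..b, |g' x| / (lam * g x ^ 2))
          = ∫ x in a..b, g' x / (lam * g x ^ 2) := by
        apply intervalIntegral.integral_congr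
        intro x hx
        rw [huIcc] at hx
        simp only
        rw [_root_.abs_of_nonneg (hpos x hx)]
      rw [this, hftc]; linarith
    · have : (∫ x in a..b, |g' x| / (lam * g x ^ 2))
          = ∫ x in a..b, -(g' x / (lam * g x ^ 2)) := by
        apply intervalIntegral.integral_congr
        intro x hx
        rw [huIcc] at hx
        simp only
        rw [abs_of_nonpos (hneg x hx)]
        ring
      rw [this, intervalIntegral.integral_neg, hftc]; linarith
  have hIbound : ‖∫ x in a..b, h' x * E x‖ ≤ 1 / (c * lam) := by
    calc ‖∫ x in a..b, h' x * E x‖ ≤ ∫ x in a..b, ‖h' x * E x‖ :=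
          intervalIntegral.norm_integral_le_integral_norm hab.le
      _ = ∫ x in a..b, |g' x| / (lam * g x ^ 2) := by
          apply intervalIntegral.integral_congr
          intro x hx; rw [huIcc] at hx; exact hnormh' x hx
      _ ≤ 1 / (c * lam) := hJ
  calc ‖(w b)⁻¹ * E b - (w a)⁻¹ * E a - ∫ x in a..b, h' x * E x‖
      ≤ ‖(w b)⁻¹ * E b - (w a)⁻¹ * E a‖ + ‖∫ x in a..b, h' x * E x‖ := norm_sub_le _ _
    _ ≤ (‖(w b)⁻¹ * E b‖ + ‖(w a)⁻¹ * E a‖) + ‖∫ x in a..b, h' x * E x‖ := by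
        have := norm_sub_le ((w b)⁻¹ * E b) ((w a)⁻¹ * E a); linarith
    _ ≤ (1 / (c * lam) + 1 / (c * lam)) + 1 / (c * lam) := by
        have h1 : ‖(w b)⁻¹ * E b‖ ≤ 1 / (c * lam) := by
          rw [norm_mul, hnormE, mul_one]; exact hinv b hmem_b
        have h2 : ‖(w a)⁻¹ * E a‖ ≤ 1 / (c * lam) := by
          rw [norm_mul, hnormE, mul_one]; exact hinv a hmem_a
        linarith
    _ = 3 / (c * lam) := by ring


def Bound (k : ℕ) (C : ℝ) : Prop :=
  ∀ a b : ℝ, a < b → ∀ c : ℝ, 0 < c → ∀ lam : ℝ, 0 < lam → ∀ d : ℕ → ℝ → ℝ,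
    (∀ n, ∀ x ∈ Icc a b, HasDerivAt (d n) (d (n+1) x) x) →
    (∀ x ∈ Icc a b, c ≤ d k x) →
    (k = 1 → (∀ x ∈ Icc a b, 0 ≤ d 2 x) ∨ (∀ x ∈ Icc a b, d 2 x ≤ 0)) →
    ‖∫ x in a..b, Complex.exp (Complex.I * ((lam * d 0 x : ℝ) : ℂ))‖
      ≤ C * (c * lam) ^ (-1 / (k:ℝ))

lemma bound_one : Bound 1 3 := by
  intro a b hab c hc lam hlam d hd hck hsign
  have h3 := base a b hab c lam hc hlam (d 0) (d 1) (d 2)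
    (hd 0) (hd 1) (fun x hx => ((hd 2 x hx).continuousAt).continuousWithinAt)
    hck (hsign rfl)
  calc ‖∫ x in a..b, Complex.exp (Complex.I * ((lam * d 0 x : ℝ) : ℂ))‖
      ≤ 3 / (c * lam) := h3
    _ = 3 * (c * lam) ^ (-1 / ((1:ℕ):ℝ)) := by
        rw [show -1 / (((1:ℕ)):ℝ) = -1 by norm_num, Real.rpow_neg_one, div_eq_mul_inv]

lemma step_right {k : ℕ} (hk : 1 ≤ k) {C : ℝ} (hC : 0 < C) (IH : Bound k C) :
    ∀ a b : ℝ, a < b → ∀ c : ℝ, 0 < c → ∀ lam : ℝ, 0 < lam → ∀ d : ℕ → ℝ → ℝ,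
    (∀ n, ∀ x ∈ Icc a b, HasDerivAt (d n) (d (n+1) x) x) →
    (∀ x ∈ Icc a b, c ≤ d (k+1) x) →
    0 ≤ d k a →
    ‖∫ x in a..b, Complex.exp (Complex.I * ((lam * d 0 x : ℝ) : ℂ))‖
      ≤ (C + 1) * (c * lam) ^ (-1 / ((k:ℝ)+1)) := by
  intro a b hab c hc lam hlam d hd hck hka
  set δ := (c * lam) ^ (-1 / ((k:ℝ)+1)) with hδ
  have hδpos : 0 < δ := Real.rpow_pos_of_pos (by positivity) _
  by_cases hsplit : b ≤ a + δ
  · have h1 := norm_integral_exp_le (d 0) lam a b hab.le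
    have : b - a ≤ δ := by linarith
    nlinarith
  · push_neg at hsplit
    have haδ : a < a + δ := by linarith
    have hsub : Icc (a+δ) b ⊆ Icc a b := Icc_subset_Icc (by linarith) le_rfl
    have hlow : ∀ x ∈ Icc (a+δ) b, c * δ ≤ d k x := by
      intro x hx
      have hx' : x ∈ Icc a b := hsub hx
      have h1 := sub_le_of_hasDerivAt (hd k) hck a ⟨le_refl a, hab.le⟩ x hx' (by linarith [hx.1])
      have h2 : δ ≤ x - a := by linarith [hx.1]
      nlinarith
    have hIH := IH (a+δ) b hsplit (c*δ) (by positivity) lam hlam d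
      (fun n x hx => hd n x (hsub hx)) hlow
      (fun hk1 => Or.inl (fun x hx => by
        have h2 := hck x (hsub hx)
        rw [hk1] at h2
        norm_num at h2
        linarith))
    have hkey : (c * δ * lam) ^ (-1 / (k:ℝ)) = δ := by
      have h1 : c * δ * lam = (c * lam) * (c * lam) ^ (-1 / ((k:ℝ)+1)) := by
        rw [hδ]; ring
      rw [h1, rpow_key (by positivity) hk]
    rw [hkey] at hIH
    have hEcont : ContinuousOn (fun x => Complex.exp (Complex.I * ((lam * d 0 x : ℝ) : ℂ)))
        (Icc a b) := by
      apply Complex.continuous_exp.comp_continuousOn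
      apply continuousOn_const.mul
      exact Complex.continuous_ofReal.comp_continuousOn (continuousOn_const.mul
        (fun x hx => ((hd 0 x hx).continuousAt).continuousWithinAt))
    have hint1 : IntervalIntegrable (fun x => Complex.exp (Complex.I * ((lam * d 0 x : ℝ) : ℂ)))
        MeasureTheory.volume a (a+δ) := by
      apply ContinuousOn.intervalIntegrable
      apply hEcont.mono
      rw [uIcc_of_le haδ.le]
      exact Icc_subset_Icc le_rfl hsplit.le
    have hint2 : IntervalIntegrable (fun x => Complex.exp (Complex.I * ((lam * d 0 x : ℝ) : ℂ)))
        MeasureTheory.volume (a+δ) b := by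
      apply ContinuousOn.intervalIntegrable
      apply hEcont.mono
      rw [uIcc_of_le hsplit.le]
      exact hsub
    rw [← intervalIntegral.integral_add_adjacent_intervals hint1 hint2]
    have hn1 : ‖∫ x in a..(a+δ), Complex.exp (Complex.I * ((lam * d 0 x : ℝ) : ℂ))‖ ≤ δ := by
      have := norm_integral_exp_le (d 0) lam a (a+δ) haδ.le
      linarith
    calc ‖(∫ x in a..(a+δ), Complex.exp (Complex.I * ((lam * d 0 x : ℝ) : ℂ)))
          + ∫ x in (a+δ)..b, Complex.exp (Complex.I * ((lam * d 0 x : ℝ) : ℂ))‖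
        ≤ ‖∫ x in a..(a+δ), Complex.exp (Complex.I * ((lam * d 0 x : ℝ) : ℂ))‖
          + ‖∫ x in (a+δ)..b, Complex.exp (Complex.I * ((lam * d 0 x : ℝ) : ℂ))‖ := norm_add_le _ _
      _ ≤ δ + C * δ := add_le_add hn1 hIH
      _ = (C + 1) * δ := by ring

lemma step_left {k : ℕ} (hk : 1 ≤ k) {C : ℝ} (hC : 0 < C) (IH : Bound k C) :
    ∀ a b : ℝ, a < b → ∀ c : ℝ, 0 < c → ∀ lam : ℝ, 0 < lam → ∀ d : ℕ → ℝ → ℝ,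
    (∀ n, ∀ x ∈ Icc a b, HasDerivAt (d n) (d (n+1) x) x) →
    (∀ x ∈ Icc a b, c ≤ d (k+1) x) →
    d k b ≤ 0 →
    ‖∫ x in a..b, Complex.exp (Complex.I * ((lam * d 0 x : ℝ) : ℂ))‖
      ≤ (C + 1) * (c * lam) ^ (-1 / ((k:ℝ)+1)) := by
  intro a b hab c hc lam hlam d hd hck hkb
  set δ := (c * lam) ^ (-1 / ((k:ℝ)+1)) with hδ
  have hδpos : 0 < δ := Real.rpow_pos_of_pos (by positivity) _
  by_cases hsplit : b - δ ≤ a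
  · have h1 := norm_integral_exp_le (d 0) lam a b hab.le
    have : b - a ≤ δ := by linarith
    nlinarith
  · push_neg at hsplit
    have hbδ : b - δ < b := by linarith
    have hsub : Icc a (b-δ) ⊆ Icc a b := Icc_subset_Icc le_rfl (by linarith)
    have hlow : ∀ x ∈ Icc a (b-δ), c * δ ≤ -(d k x) := by
      intro x hx
      have hx' : x ∈ Icc a b := hsub hx
      have h1 := sub_le_of_hasDerivAt (hd k) hck x hx' b ⟨hab.le, le_refl b⟩ (by linarith [hx.2])
      have h2 : δ ≤ b - x := by linarith [hx.2]
      nlinarith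
    have hIH := IH a (b-δ) hsplit (c*δ) (by positivity) lam hlam (fun n x => -(d n x))
      (fun n x hx => (hd n x (hsub hx)).neg) hlow
      (fun hk1 => Or.inr (fun x hx => by
        have h2 := hck x (hsub hx)
        rw [hk1] at h2
        norm_num at h2
        linarith))
    have hkey : (c * δ * lam) ^ (-1 / (k:ℝ)) = δ := by
      have h1 : c * δ * lam = (c * lam) * (c * lam) ^ (-1 / ((k:ℝ)+1)) := by
        rw [hδ]; ring
      rw [h1, rpow_key (by positivity) hk]
    rw [hkey] at hIH
    have hneg : ‖∫ x in a..(b-δ), Complex.exp (Complex.I * ((lam * d 0 x : ℝ) : ℂ))‖ ≤ C * δ := by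
      rw [← norm_integral_exp_neg (d 0) lam a (b-δ)]
      exact hIH
    have hEcont : ContinuousOn (fun x => Complex.exp (Complex.I * ((lam * d 0 x : ℝ) : ℂ)))
        (Icc a b) := by
      apply Complex.continuous_exp.comp_continuousOn
      apply continuousOn_const.mul
      exact Complex.continuous_ofReal.comp_continuousOn (continuousOn_const.mul
        (fun x hx => ((hd 0 x hx).continuousAt).continuousWithinAt))
    have hint1 : IntervalIntegrable (fun x => Complex.exp (Complex.I * ((lam * d 0 x : ℝ) : ℂ)))
        MeasureTheory.volume a (b-δ) := by
      apply ContinuousOn.intervalIntegrable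
      apply hEcont.mono
      rw [uIcc_of_le hsplit.le]
      exact hsub
    have hint2 : IntervalIntegrable (fun x => Complex.exp (Complex.I * ((lam * d 0 x : ℝ) : ℂ)))
        MeasureTheory.volume (b-δ) b := by
      apply ContinuousOn.intervalIntegrable
      apply hEcont.mono
      rw [uIcc_of_le hbδ.le]
      exact Icc_subset_Icc (by linarith) le_rfl
    rw [← intervalIntegral.integral_add_adjacent_intervals hint1 hint2]
    have hn2 : ‖∫ x in (b-δ)..b, Complex.exp (Complex.I * ((lam * d 0 x : ℝ) : ℂ))‖ ≤ δ := by
      have := norm_integral_exp_le (d 0) lam (b-δ) b hbδ.le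
      linarith
    calc ‖(∫ x in a..(b-δ), Complex.exp (Complex.I * ((lam * d 0 x : ℝ) : ℂ)))
          + ∫ x in (b-δ)..b, Complex.exp (Complex.I * ((lam * d 0 x : ℝ) : ℂ))‖
        ≤ ‖∫ x in a..(b-δ), Complex.exp (Complex.I * ((lam * d 0 x : ℝ) : ℂ))‖
          + ‖∫ x in (b-δ)..b, Complex.exp (Complex.I * ((lam * d 0 x : ℝ) : ℂ))‖ := norm_add_le _ _
      _ ≤ C * δ + δ := add_le_add hneg hn2
      _ = (C + 1) * δ := by ring

lemma bound_succ {k : ℕ} (hk : 1 ≤ k) {C : ℝ} (hC : 0 < C) (IH : Bound k C) :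
    Bound (k+1) (2*(C+1)) := by
  intro a b hab c hc lam hlam d hd hck _
  have hcast : -1 / (((k+1:ℕ)):ℝ) = -1 / ((k:ℝ)+1) := by push_cast; ring
  rw [hcast]
  have hδpos : 0 < (c * lam) ^ (-1 / ((k:ℝ)+1)) := Real.rpow_pos_of_pos (by positivity) _
  rcases le_or_gt 0 (d k a) with hka | hka
  · have := step_right hk hC IH a b hab c hc lam hlam d hd hck hka
    nlinarith
  rcases le_or_gt (d k b) 0 with hkb | hkb
  · have := step_left hk hC IH a b hab c hc lam hlam d hd hck hkb
    nlinarith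
  · have hcont : ContinuousOn (d k) (Icc a b) :=
      fun x hx => ((hd k x hx).continuousAt).continuousWithinAt
    have h0mem : (0:ℝ) ∈ Icc (d k a) (d k b) := ⟨hka.le, hkb.le⟩
    obtain ⟨x0, hx0mem, hx0⟩ := intermediate_value_Icc hab.le hcont h0mem
    have hax0 : a < x0 := by
      rcases eq_or_lt_of_le hx0mem.1 with h | h
      · exfalso; rw [← h] at hx0; linarith
      · exact h
    have hx0b : x0 < b := by
      rcases eq_or_lt_of_le hx0mem.2 with h | h
      · exfalso; rw [h] at hx0; linarith
      · exact h
    have hsub1 : Icc a x0 ⊆ Icc a b := Icc_subset_Icc le_rfl hx0mem.2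
    have hsub2 : Icc x0 b ⊆ Icc a b := Icc_subset_Icc hx0mem.1 le_rfl
    have hL := step_left hk hC IH a x0 hax0 c hc lam hlam d
      (fun n x hx => hd n x (hsub1 hx)) (fun x hx => hck x (hsub1 hx)) (le_of_eq hx0)
    have hR := step_right hk hC IH x0 b hx0b c hc lam hlam d
      (fun n x hx => hd n x (hsub2 hx)) (fun x hx => hck x (hsub2 hx)) (ge_of_eq hx0)
    have hEcont : ContinuousOn (fun x => Complex.exp (Complex.I * ((lam * d 0 x : ℝ) : ℂ)))
        (Icc a b) := by
      apply Complex.continuous_exp.comp_continuousOn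
      apply continuousOn_const.mul
      exact Complex.continuous_ofReal.comp_continuousOn (continuousOn_const.mul
        (fun x hx => ((hd 0 x hx).continuousAt).continuousWithinAt))
    have hint1 : IntervalIntegrable (fun x => Complex.exp (Complex.I * ((lam * d 0 x : ℝ) : ℂ)))
        MeasureTheory.volume a x0 := by
      apply ContinuousOn.intervalIntegrable
      apply hEcont.mono
      rw [uIcc_of_le hax0.le]
      exact hsub1
    have hint2 : IntervalIntegrable (fun x => Complex.exp (Complex.I * ((lam * d 0 x : ℝ) : ℂ)))
        MeasureTheory.volume x0 b := by
      apply ContinuousOn.intervalIntegrable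
      apply hEcont.mono
      rw [uIcc_of_le hx0b.le]
      exact hsub2
    rw [← intervalIntegral.integral_add_adjacent_intervals hint1 hint2]
    calc ‖(∫ x in a..x0, Complex.exp (Complex.I * ((lam * d 0 x : ℝ) : ℂ)))
          + ∫ x in x0..b, Complex.exp (Complex.I * ((lam * d 0 x : ℝ) : ℂ))‖
        ≤ ‖∫ x in a..x0, Complex.exp (Complex.I * ((lam * d 0 x : ℝ) : ℂ))‖
          + ‖∫ x in x0..b, Complex.exp (Complex.I * ((lam * d 0 x : ℝ) : ℂ))‖ := norm_add_le _ _
      _ ≤ (C + 1) * (c * lam) ^ (-1 / ((k:ℝ)+1)) + (C + 1) * (c * lam) ^ (-1 / ((k:ℝ)+1)) :=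
          add_le_add hL hR
      _ = 2 * (C + 1) * (c * lam) ^ (-1 / ((k:ℝ)+1)) := by ring

lemma bound_exists : ∀ k : ℕ, 1 ≤ k → ∃ C : ℝ, 0 < C ∧ Bound k C := by
  intro k hk
  induction k, hk using Nat.le_induction with
  | base => exact ⟨3, by norm_num, bound_one⟩
  | succ n hn ih =>
    obtain ⟨C, hC, hB⟩ := ih
    exact ⟨2*(C+1), by positivity, bound_succ hn hC hB⟩

lemma le_on_Icc_of_Ioo {a b c : ℝ} (hab : a < b) {h : ℝ → ℝ}
    (hcont : ContinuousOn h (Icc a b)) (hIoo : ∀ x ∈ Ioo a b, c ≤ h x) :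
    ∀ x ∈ Icc a b, c ≤ h x := by
  intro x hx
  have hxcl : x ∈ closure (Ioo a b) := by rw [closure_Ioo hab.ne]; exact hx
  haveI : (𝓝[Ioo a b] x).NeBot := mem_closure_iff_nhdsWithin_neBot.1 hxcl
  have htend : Filter.Tendsto h (𝓝[Ioo a b] x) (𝓝 (h x)) :=
    (hcont x hx).mono Ioo_subset_Icc_self
  exact ge_of_tendsto htend (Filter.eventually_iff_exists_mem.2
    ⟨Ioo a b, self_mem_nhdsWithin, hIoo⟩)

lemma sign_dichotomy {a b c : ℝ} (hab : a < b) (hc : 0 < c) {h : ℝ → ℝ}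
    (hcont : ContinuousOn h (Icc a b)) (habs : ∀ x ∈ Ioo a b, c ≤ |h x|) :
    (∀ x ∈ Icc a b, c ≤ h x) ∨ (∀ x ∈ Icc a b, h x ≤ -c) := by
  have hmid : (a+b)/2 ∈ Ioo a b := ⟨by linarith, by linarith⟩
  have key : (∀ x ∈ Ioo a b, c ≤ h x) ∨ (∀ x ∈ Ioo a b, h x ≤ -c) := by
    have ivt : ∀ x ∈ Ioo a b, ∀ y ∈ Ioo a b, h x ≤ -c → c ≤ h y → False := by
      intro x hx y hy hxn hyp
      have husub : uIcc x y ⊆ Ioo a b := (Set.ordConnected_Ioo).uIcc_subset hx hy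
      have hcont' : ContinuousOn h (uIcc x y) :=
        hcont.mono (husub.trans Ioo_subset_Icc_self)
      have h0 : (0:ℝ) ∈ uIcc (h x) (h y) := by
        rw [Set.mem_uIcc]; left; constructor <;> linarith
      obtain ⟨z, hz, hz0⟩ := intermediate_value_uIcc hcont' h0
      have := habs z (husub hz)
      rw [hz0] at this
      simp only [abs_zero] at this
      linarith
    rcases le_or_gt c (h ((a+b)/2)) with hm | hm
    · left
      intro x hx
      by_contra hcon
      push_neg at hcon
      have hxneg : h x ≤ -c := by
        have := habs x hx
        rcases abs_cases (h x) with ⟨h1,_⟩|⟨h1,_⟩ <;> linarith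
      exact ivt x hx _ hmid hxneg hm
    · right
      have hmneg : h ((a+b)/2) ≤ -c := by
        have := habs _ hmid
        rcases abs_cases (h ((a+b)/2)) with ⟨h1,_⟩|⟨h1,_⟩ <;> linarith
      intro x hx
      by_contra hcon
      push_neg at hcon
      have hxpos : c ≤ h x := by
        have := habs x hx
        rcases abs_cases (h x) with ⟨h1,_⟩|⟨h1,_⟩ <;> linarith
      exact ivt _ hmid x hx hmneg hxpos
  rcases key with hp | hn
  · left; exact le_on_Icc_of_Ioo hab hcont hp
  · right
    intro x hx
    have h2 := le_on_Icc_of_Ioo hab hcont.neg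
      (fun y hy => by simpa using neg_le_neg (hn y hy)) x hx
    simp only [Pi.neg_apply] at h2
    linarith

lemma chain {U : Set ℝ} (hU : IsOpen U) {φ : ℝ → ℝ} (hφ : ContDiffOn ℝ (⊤ : ℕ∞) φ U) :
    ∀ n, ∀ x ∈ U, HasDerivAt (iteratedDerivWithin n φ U)
      (iteratedDerivWithin (n+1) φ U x) x := by
  intro n x hx
  have hdiff : DifferentiableOn ℝ (iteratedDerivWithin n φ U) U :=
    hφ.differentiableOn_iteratedDerivWithin (by exact_mod_cast WithTop.natCast_lt_top n)
      hU.uniqueDiffOn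
  have hx' : U ∈ 𝓝 x := hU.mem_nhds hx
  have hda : DifferentiableAt ℝ (iteratedDerivWithin n φ U) x :=
    (hdiff x hx).differentiableAt hx'
  have heq : iteratedDerivWithin (n+1) φ U x = deriv (iteratedDerivWithin n φ U) x := by
    rw [iteratedDerivWithin_succ]
    exact derivWithin_of_mem_nhds hx'
  rw [heq]
  exact hda.hasDerivAt


end VdC

open Set intervalIntegral

/-- **Van der Corput lemma, case `k ≥ 2`.**
For every integer `k ≥ 2` there is a constant `C_k` such that for all `a < b`, `c > 0`,
`λ > 0`, every smooth real phase `φ` on an open interval containing `[a, b]` with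
`|φ^{(k)}| ≥ c` on `(a, b)`, and every `C¹` amplitude `ψ` on `[a, b]`,
`|∫_a^b e^{iλφ} ψ| ≤ C_k (cλ)^{-1/k} (|ψ(b)| + ∫_a^b |ψ'|)`. -/
theorem stmt_1 (k : ℕ) (hk : 2 ≤ k) :
    ∃ C : ℝ, 0 < C ∧
      ∀ a b : ℝ, a < b →
      ∀ c : ℝ, 0 < c →
      ∀ lam : ℝ, 0 < lam →
      ∀ U : Set ℝ, IsOpen U → Set.Icc a b ⊆ U →
      ∀ φ : ℝ → ℝ, ContDiffOn ℝ (⊤ : ℕ∞) φ U →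
        (∀ x ∈ Set.Ioo a b, c ≤ |iteratedDerivWithin k φ U x|) →
      ∀ ψ : ℝ → ℂ, ContDiffOn ℝ 1 ψ (Set.Icc a b) →
        ‖∫ x in a..b, Complex.exp (Complex.I * ((lam * φ x : ℝ) : ℂ)) * ψ x‖ ≤
          C * (c * lam) ^ (-(1 / (k : ℝ))) *
            (‖ψ b‖ + ∫ x in a..b, ‖derivWithin ψ (Set.Icc a b) x‖) := by
  obtain ⟨C, hC, hB⟩ := VdC.bound_exists k (by omega)
  refine ⟨C, hC, ?_⟩
  intro a b hab c hc lam hlam U hUopen hUsub φ hφ hphik ψ hψ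
  rw [show -(1 / (k:ℝ)) = -1 / (k:ℝ) by ring]
  set M : ℝ := C * (c * lam) ^ (-1 / (k:ℝ)) with hM_def
  have hMpos : 0 < M := by
    apply mul_pos hC
    exact Real.rpow_pos_of_pos (by positivity) _
  set d : ℕ → ℝ → ℝ := fun n => iteratedDerivWithin n φ U with hd_def
  have hd0 : d 0 = φ := by rw [hd_def]; exact iteratedDerivWithin_zero
  have hchain : ∀ n, ∀ x ∈ Icc a b, HasDerivAt (d n) (d (n+1) x) x :=
    fun n x hx => VdC.chain hUopen hφ n x (hUsub hx)
  have hdkcont : ContinuousOn (d k) (Icc a b) :=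
    fun x hx => ((hchain k x hx).continuousAt).continuousWithinAt
  have hsigns := VdC.sign_dichotomy hab hc hdkcont hphik
  -- the uniform bound on the primitive
  have hMbound : ∀ u ∈ Icc a b,
      ‖∫ x in a..u, Complex.exp (Complex.I * ((lam * φ x : ℝ) : ℂ))‖ ≤ M := by
    intro u hu
    rcases eq_or_lt_of_le hu.1 with heq | hau
    · rw [← heq, intervalIntegral.integral_same, norm_zero]
      exact hMpos.le
    · have hsub : Icc a u ⊆ Icc a b := Icc_subset_Icc le_rfl hu.2
      rcases hsigns with hpos | hneg
      · have hres := hB a u hau c hc lam hlam d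
          (fun n x hx => hchain n x (hsub hx)) (fun x hx => hpos x (hsub hx))
          (fun h1 => absurd h1 (by omega))
        rw [hd0] at hres
        exact hres
      · have hres := hB a u hau c hc lam hlam (fun n x => -(d n x))
          (fun n x hx => (hchain n x (hsub hx)).neg)
          (fun x hx => by linarith [hneg x (hsub hx)])
          (fun h1 => absurd h1 (by omega))
        beta_reduce at hres
        rw [hd0] at hres
        rw [← VdC.norm_integral_exp_neg φ lam a u]
        exact hres
  -- continuity facts
  have hφcont : ContinuousOn φ U := hφ.continuousOn
  have hEcontU : ContinuousOn (fun x => Complex.exp (Complex.I * ((lam * φ x : ℝ) : ℂ))) U := by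
    apply Complex.continuous_exp.comp_continuousOn
    apply continuousOn_const.mul
    exact Complex.continuous_ofReal.comp_continuousOn (continuousOn_const.mul hφcont)
  have hEcont : ContinuousOn (fun x => Complex.exp (Complex.I * ((lam * φ x : ℝ) : ℂ)))
      (Icc a b) := hEcontU.mono hUsub
  have huIcc : uIcc a b = Icc a b := uIcc_of_le hab.le
  set F : ℝ → ℂ := fun u => ∫ x in a..u, Complex.exp (Complex.I * ((lam * φ x : ℝ) : ℂ))
    with hF_def
  have hEint : IntervalIntegrable (fun x => Complex.exp (Complex.I * ((lam * φ x : ℝ) : ℂ)))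
      MeasureTheory.volume a b := by
    apply ContinuousOn.intervalIntegrable; rw [huIcc]; exact hEcont
  have hF : ∀ u ∈ Icc a b, HasDerivAt F
      (Complex.exp (Complex.I * ((lam * φ u : ℝ) : ℂ))) u := by
    intro u hu
    apply intervalIntegral.integral_hasDerivAt_right
    · apply ContinuousOn.intervalIntegrable
      apply hEcont.mono
      rw [uIcc_of_le hu.1]
      exact Icc_subset_Icc le_rfl hu.2
    · exact hEcontU.stronglyMeasurableAtFilter hUopen u (hUsub hu)
    · exact (hEcontU u (hUsub hu)).continuousAt (hUopen.mem_nhds (hUsub hu))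
  have hFcont : ContinuousOn F (Icc a b) :=
    fun x hx => ((hF x hx).continuousAt).continuousWithinAt
  have huni : UniqueDiffOn ℝ (Icc a b) := uniqueDiffOn_Icc hab
  have hψdiff : DifferentiableOn ℝ ψ (Icc a b) := hψ.differentiableOn one_ne_zero
  have hψd : ∀ x ∈ Icc a b, HasDerivWithinAt ψ (derivWithin ψ (Icc a b) x) (Icc a b) x :=
    fun x hx => (hψdiff x hx).hasDerivWithinAt
  have hψ'cont : ContinuousOn (fun x => derivWithin ψ (Icc a b) x) (Icc a b) :=
    hψ.continuousOn_derivWithin huni (le_refl 1)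
  have hψcont : ContinuousOn ψ (Icc a b) := hψ.continuousOn
  have hψ'int : IntervalIntegrable (fun x => derivWithin ψ (Icc a b) x)
      MeasureTheory.volume a b := by
    apply ContinuousOn.intervalIntegrable; rw [huIcc]; exact hψ'cont
  have hibp := intervalIntegral.integral_mul_deriv_eq_deriv_mul_of_hasDerivWithinAt
    (u := F) (v := ψ) (u' := fun x => Complex.exp (Complex.I * ((lam * φ x : ℝ) : ℂ)))
    (v' := fun x => derivWithin ψ (Icc a b) x)
    (fun x hx => ((hF x (huIcc ▸ hx)).hasDerivWithinAt).mono (by rw [huIcc]))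
    (fun x hx => by rw [huIcc] at hx ⊢; exact hψd x hx)
    hEint hψ'int
  have hFa : F a = 0 := intervalIntegral.integral_same
  have hgoal_eq : (∫ x in a..b, Complex.exp (Complex.I * ((lam * φ x : ℝ) : ℂ)) * ψ x)
      = F b * ψ b - ∫ x in a..b, F x * derivWithin ψ (Icc a b) x := by
    rw [hibp, hFa]
    ring
  rw [hgoal_eq]
  have hFψ'cont : ContinuousOn (fun x => F x * derivWithin ψ (Icc a b) x) (Icc a b) :=
    hFcont.mul hψ'cont
  have hFψ'int : IntervalIntegrable (fun x => F x * derivWithin ψ (Icc a b) x)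
      MeasureTheory.volume a b := by
    apply ContinuousOn.intervalIntegrable; rw [huIcc]; exact hFψ'cont
  have hnormint : IntervalIntegrable (fun x => ‖F x * derivWithin ψ (Icc a b) x‖)
      MeasureTheory.volume a b := by
    apply ContinuousOn.intervalIntegrable; rw [huIcc]; exact hFψ'cont.norm
  have hMint : IntervalIntegrable (fun x => M * ‖derivWithin ψ (Icc a b) x‖)
      MeasureTheory.volume a b := by
    apply ContinuousOn.intervalIntegrable; rw [huIcc]
    exact continuousOn_const.mul hψ'cont.norm
  have hFb : ‖F b‖ ≤ M := hMbound b ⟨hab.le, le_rfl⟩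
  calc ‖F b * ψ b - ∫ x in a..b, F x * derivWithin ψ (Icc a b) x‖
      ≤ ‖F b * ψ b‖ + ‖∫ x in a..b, F x * derivWithin ψ (Icc a b) x‖ := norm_sub_le _ _
    _ ≤ M * ‖ψ b‖ + ∫ x in a..b, ‖F x * derivWithin ψ (Icc a b) x‖ := by
        apply add_le_add
        · rw [norm_mul]
          exact mul_le_mul_of_nonneg_right hFb (norm_nonneg _)
        · exact intervalIntegral.norm_integral_le_integral_norm hab.le
    _ ≤ M * ‖ψ b‖ + ∫ x in a..b, M * ‖derivWithin ψ (Icc a b) x‖ := by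
        apply add_le_add_right
        apply intervalIntegral.integral_mono_on hab.le hnormint hMint
        intro x hx
        rw [norm_mul]
        exact mul_le_mul_of_nonneg_right (hMbound x hx) (norm_nonneg _)
    _ = M * (‖ψ b‖ + ∫ x in a..b, ‖derivWithin ψ (Icc a b) x‖) := by
        rw [intervalIntegral.integral_const_mul]
        ring
end

section
/- There exists an absolute constant C such that for all real numbers a < b, all c > 0, all λ > 0, every smooth real-valued function φ on an open interval containing [a,b] with |φ′(x)| ≥ c for all x ∈ (a,b) and with φ′ monotone on (a,b), and every C¹ function ψ on [a,b], one has |∫_a^b e^{iλφ(x)} ψ(x) dx| ≤ C (cλ)^{−1} (|ψ(b)| + ∫_a^b |ψ′(x)| dx). -/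
open Set intervalIntegral MeasureTheory

lemma vdc_deriv_nonneg_of_monotoneOn {f : ℝ → ℝ} {a b x d : ℝ} (hx : x ∈ Set.Ioo a b)
    (hmono : MonotoneOn f (Set.Ioo a b)) (hd : HasDerivAt f d x) : 0 ≤ d := by
  have hxs : x ∉ Set.Ioo x b := fun h => lt_irrefl x h.1
  have hslope : Filter.Tendsto (slope f x) (nhdsWithin x (Set.Ioo x b)) (nhds d) :=
    (hasDerivWithinAt_iff_tendsto_slope' hxs).mp (hd.hasDerivWithinAt)
  have hne : (nhdsWithin x (Set.Ioo x b)).NeBot := by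
    rw [← mem_closure_iff_nhdsWithin_neBot, closure_Ioo hx.2.ne]
    exact ⟨le_rfl, hx.2.le⟩
  refine ge_of_tendsto hslope ?_
  filter_upwards [self_mem_nhdsWithin] with y hy
  have hy1 : x < y := hy.1
  have hym : y ∈ Set.Ioo a b := ⟨hx.1.trans hy1, hy.2⟩
  have hfy : f x ≤ f y := hmono hx hym hy1.le
  rw [slope_def_field]
  exact div_nonneg (by linarith) (by linarith)

/-- **Van der Corput lemma, case `k = 1` with monotone derivative.**
There is an absolute constant `C` such that for all `a < b`, `c > 0`, `λ > 0`, every smooth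
real phase `φ` on an open interval containing `[a, b]` with `|φ'| ≥ c` on `(a, b)` and `φ'`
monotone on `(a, b)`, and every `C¹` amplitude `ψ` on `[a, b]`,
`|∫_a^b e^{iλφ} ψ| ≤ C (cλ)^{-1} (|ψ(b)| + ∫_a^b |ψ'|)`. -/
theorem stmt_2 :
    ∃ C : ℝ, 0 < C ∧
      ∀ a b : ℝ, a < b →
      ∀ c : ℝ, 0 < c →
      ∀ lam : ℝ, 0 < lam →
      ∀ U : Set ℝ, IsOpen U → Set.Icc a b ⊆ U →
      ∀ φ : ℝ → ℝ, ContDiffOn ℝ (⊤ : ℕ∞) φ U →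
        (∀ x ∈ Set.Ioo a b, c ≤ |derivWithin φ U x|) →
        (MonotoneOn (derivWithin φ U) (Set.Ioo a b) ∨
          AntitoneOn (derivWithin φ U) (Set.Ioo a b)) →
      ∀ ψ : ℝ → ℂ, ContDiffOn ℝ 1 ψ (Set.Icc a b) →
        ‖∫ x in a..b, Complex.exp (Complex.I * ((lam * φ x : ℝ) : ℂ)) * ψ x‖ ≤
          C * (c * lam)⁻¹ *
            (‖ψ b‖ + ∫ x in a..b, ‖derivWithin ψ (Set.Icc a b) x‖) := by
  refine ⟨3, by norm_num, ?_⟩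
  intro a b hab c hc lam hlam U hU hUsub φ hφ hφ'low hφ'mono ψ hψ
  have hab' : a ≤ b := hab.le
  set M : ℝ := (c * lam)⁻¹ with hM
  have hM0 : 0 < M := by positivity
  set φ' : ℝ → ℝ := derivWithin φ U with hφ'def
  set D2 : ℝ → ℝ := deriv (deriv φ) with hD2def
  set g : ℝ → ℂ := fun x => Complex.exp (Complex.I * ((lam * φ x : ℝ) : ℂ)) with hgdef
  set ψ' : ℝ → ℂ := derivWithin ψ (Set.Icc a b) with hψ'def
  -- derivatives of φ
  have hφd : ∀ x ∈ U, HasDerivAt φ (φ' x) x := by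
    intro x hx
    have h1 := ((hφ.differentiableOn (by simp)).differentiableAt (hU.mem_nhds hx)).hasDerivAt
    rwa [hφ'def, derivWithin_of_isOpen hU hx]
  have h2smooth : ContDiffOn ℝ 1 (deriv φ) U := hφ.deriv_of_isOpen hU (by exact WithTop.coe_le_coe.mpr le_top)
  have hφ'dU : ∀ x ∈ U, HasDerivAt φ' (D2 x) x := by
    intro x hx
    have h1 : HasDerivAt (deriv φ) (D2 x) x :=
      ((h2smooth.differentiableOn one_ne_zero).differentiableAt (hU.mem_nhds hx)).hasDerivAt
    refine h1.congr_of_eventuallyEq ?_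
    filter_upwards [hU.mem_nhds hx] with y hy
    exact derivWithin_of_isOpen hU hy
  have hφ'contU : ContinuousOn φ' U :=
    (h2smooth.continuousOn).congr fun y hy => derivWithin_of_isOpen hU hy
  have hD2contU : ContinuousOn D2 U := h2smooth.continuousOn_deriv_of_isOpen hU le_rfl
  -- sign of φ' on Icc
  have hdich : ∀ x ∈ Set.Ioo a b, c ≤ φ' x ∨ φ' x ≤ -c := by
    intro x hx
    rcases le_abs.mp (hφ'low x hx) with h | h
    · exact Or.inl h
    · exact Or.inr (by linarith)
  have hIooSign : (∀ x ∈ Set.Ioo a b, c ≤ φ' x) ∨ (∀ x ∈ Set.Ioo a b, φ' x ≤ -c) := by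
    by_contra hcon
    push_neg at hcon
    obtain ⟨⟨x, hx, hx'⟩, ⟨y, hy, hy'⟩⟩ := hcon
    have hxle : φ' x ≤ -c := (hdich x hx).resolve_left (not_le.mpr hx')
    have hyge : c ≤ φ' y := (hdich y hy).resolve_right (not_le.mpr hy')
    have hsub : Set.uIcc x y ⊆ Set.Ioo a b := Set.ordConnected_Ioo.uIcc_subset hx hy
    have hconn : ContinuousOn φ' (Set.uIcc x y) :=
      hφ'contU.mono fun z hz => hUsub (Set.Ioo_subset_Icc_self (hsub hz))
    have h0 : (0 : ℝ) ∈ Set.uIcc (φ' x) (φ' y) := by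
      rw [Set.mem_uIcc]; left; constructor <;> linarith
    obtain ⟨z, hz, hz0⟩ := intermediate_value_uIcc hconn h0
    have := hφ'low z (hsub hz)
    rw [hz0] at this
    simp at this
    linarith
  have hsign : (∀ x ∈ Set.Icc a b, c ≤ φ' x) ∨ (∀ x ∈ Set.Icc a b, φ' x ≤ -c) := by
    have hext : ∀ x ∈ Set.Icc a b, Filter.Tendsto φ' (nhdsWithin x (Set.Ioo a b)) (nhds (φ' x)) := by
      intro x hx
      exact (hφ'contU x (hUsub hx)).mono fun z hz => hUsub (Set.Ioo_subset_Icc_self hz)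
    have hnb : ∀ x ∈ Set.Icc a b, (nhdsWithin x (Set.Ioo a b)).NeBot := by
      intro x hx
      rw [← mem_closure_iff_nhdsWithin_neBot, closure_Ioo hab.ne]
      exact hx
    rcases hIooSign with h | h
    · left
      intro x hx
      haveI := hnb x hx
      exact ge_of_tendsto (hext x hx)
        (Filter.eventually_of_mem self_mem_nhdsWithin fun y hy => h y hy)
    · right
      intro x hx
      haveI := hnb x hx
      exact le_of_tendsto (hext x hx)
        (Filter.eventually_of_mem self_mem_nhdsWithin fun y hy => h y hy)
  have hφ'abs : ∀ x ∈ Set.Icc a b, c ≤ |φ' x| := by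
    rcases hsign with h | h <;> intro x hx
    · exact (h x hx).trans (le_abs_self _)
    · exact le_trans (by linarith [h x hx]) (neg_le_abs _)
  have hφ'ne : ∀ x ∈ Set.Icc a b, φ' x ≠ 0 := by
    intro x hx h0
    have := hφ'abs x hx
    rw [h0] at this
    simp at this
    linarith
  have hlamφ'ne : ∀ x ∈ Set.Icc a b, lam * φ' x ≠ 0 :=
    fun x hx => mul_ne_zero hlam.ne' (hφ'ne x hx)
  -- sign of second derivative
  obtain ⟨ε, hε1, hεD⟩ : ∃ ε : ℝ, |ε| = 1 ∧ ∀ x ∈ Set.Ioo a b, 0 ≤ ε * D2 x := by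
    rcases hφ'mono with hmono | hanti
    · refine ⟨1, abs_one, fun x hx => ?_⟩
      rw [one_mul]
      exact vdc_deriv_nonneg_of_monotoneOn hx hmono (hφ'dU x (hUsub (Set.Ioo_subset_Icc_self hx)))
    · refine ⟨-1, by norm_num, fun x hx => ?_⟩
      have := vdc_deriv_nonneg_of_monotoneOn hx hanti.neg
        ((hφ'dU x (hUsub (Set.Ioo_subset_Icc_self hx))).neg)
      linarith
  -- auxiliary real functions
  set s : ℝ → ℝ := fun x => -(lam * φ' x)⁻¹ with hsdef
  set s' : ℝ → ℝ := fun x => lam * D2 x / (lam * φ' x) ^ 2 with hs'def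
  have hsd : ∀ x ∈ Set.Icc a b, HasDerivAt s (s' x) x := by
    intro x hx
    have h1 : HasDerivAt (fun y => lam * φ' y) (lam * D2 x) x :=
      (hφ'dU x (hUsub hx)).const_mul lam
    have h2 := (h1.inv (hlamφ'ne x hx)).neg
    refine h2.congr_deriv ?_
    rw [hs'def]
    ring
  -- norm facts
  have hgnorm : ∀ x : ℝ, ‖g x‖ = 1 := by
    intro x
    rw [hgdef]
    simp [Complex.norm_exp]
  -- values of s
  have hsrange : (∀ x ∈ Set.Icc a b, -M ≤ s x ∧ s x ≤ 0) ∨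
      (∀ x ∈ Set.Icc a b, 0 ≤ s x ∧ s x ≤ M) := by
    rcases hsign with h | h
    · left
      intro x hx
      have h1 : c ≤ φ' x := h x hx
      have h2 : 0 < lam * φ' x := mul_pos hlam (lt_of_lt_of_le hc h1)
      have h3 : (lam * φ' x)⁻¹ ≤ M := by
        rw [hM, mul_comm c lam]
        exact inv_anti₀ (by positivity) (by nlinarith)
      have h4 : 0 < (lam * φ' x)⁻¹ := inv_pos.mpr h2
      rw [hsdef]
      constructor
      · simp only [neg_le_neg_iff]; linarith
      · simp only [neg_nonpos]; linarith
    · right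
      intro x hx
      have h1 : φ' x ≤ -c := h x hx
      have h2 : 0 < lam * (-φ' x) := mul_pos hlam (by linarith)
      have h3 : (lam * (-φ' x))⁻¹ ≤ M := by
        rw [hM, mul_comm c lam]
        exact inv_anti₀ (by positivity) (by nlinarith)
      have h4 : 0 < (lam * (-φ' x))⁻¹ := inv_pos.mpr h2
      have heq : s x = (lam * (-φ' x))⁻¹ := by
        rw [hsdef]
        simp only [mul_neg, ← neg_inv]
      rw [heq]
      exact ⟨h4.le, h3⟩
  have hsM : ∀ x ∈ Set.Icc a b, |s x| ≤ M := by
    intro x hx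
    rcases hsrange with h | h <;> obtain ⟨h1, h2⟩ := h x hx <;> rw [abs_le] <;>
      constructor <;> linarith
  have hsdiff : ∀ x ∈ Set.Icc a b, ∀ y ∈ Set.Icc a b, |s x - s y| ≤ M := by
    intro x hx y hy
    rcases hsrange with h | h
    · obtain ⟨h1, h2⟩ := h x hx
      obtain ⟨h3, h4⟩ := h y hy
      rw [abs_le]; constructor <;> linarith
    · obtain ⟨h1, h2⟩ := h x hx
      obtain ⟨h3, h4⟩ := h y hy
      rw [abs_le]; constructor <;> linarith
  -- derivative of g
  have hgd : ∀ x ∈ U, HasDerivAt g (g x * (Complex.I * ((lam * φ' x : ℝ) : ℂ))) x := by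
    intro x hx
    have h1 : HasDerivAt (fun y => lam * φ y) (lam * φ' x) x := (hφd x hx).const_mul lam
    have h2 : HasDerivAt (fun y => ((lam * φ y : ℝ) : ℂ)) ((lam * φ' x : ℝ) : ℂ) x :=
      h1.ofReal_comp
    have h3 := (h2.const_mul Complex.I).cexp
    convert h3 using 1
  have hhd : ∀ x ∈ Set.Icc a b,
      HasDerivAt (fun y => Complex.I * (s y : ℂ)) (Complex.I * (s' x : ℂ)) x :=
    fun x hx => ((hsd x hx).ofReal_comp).const_mul Complex.I
  -- continuity
  have hgcontU : ContinuousOn g U := by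
    rw [hgdef]
    exact Complex.continuous_exp.comp_continuousOn
      (continuousOn_const.mul (Complex.continuous_ofReal.comp_continuousOn
        (continuousOn_const.mul hφ.continuousOn)))
  have hgcont : ContinuousOn g (Set.Icc a b) := hgcontU.mono hUsub
  have hφ'cont : ContinuousOn φ' (Set.Icc a b) := hφ'contU.mono hUsub
  have hD2cont : ContinuousOn D2 (Set.Icc a b) := hD2contU.mono hUsub
  have hscont : ContinuousOn s (Set.Icc a b) :=
    ((continuousOn_const.mul hφ'cont).inv₀ hlamφ'ne).neg
  have hs'cont : ContinuousOn s' (Set.Icc a b) :=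
    (continuousOn_const.mul hD2cont).div ((continuousOn_const.mul hφ'cont).pow 2)
      fun x hx => pow_ne_zero 2 (hlamφ'ne x hx)
  -- Step A: bound on the primitive of g
  have hFbound : ∀ t ∈ Set.Icc a b, ‖∫ x in a..t, g x‖ ≤ 3 * M := by
    intro t ht
    have hat : a ≤ t := ht.1
    have hsubI : Set.Icc a t ⊆ Set.Icc a b := Set.Icc_subset_Icc le_rfl ht.2
    have huIcc : Set.uIcc a t = Set.Icc a t := Set.uIcc_of_le hat
    have hmemI : ∀ x ∈ Set.uIcc a t, x ∈ Set.Icc a b := fun x hx => hsubI (huIcc ▸ hx)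
    have hgint : IntervalIntegrable g volume a t :=
      ContinuousOn.intervalIntegrable (by rw [huIcc]; exact hgcont.mono hsubI)
    have hu'int : IntervalIntegrable
        (fun y => g y * (Complex.I * ((lam * φ' y : ℝ) : ℂ))) volume a t := by
      apply ContinuousOn.intervalIntegrable
      rw [huIcc]
      exact (hgcont.mono hsubI).mul (continuousOn_const.mul
        (Complex.continuous_ofReal.comp_continuousOn
          (continuousOn_const.mul (hφ'cont.mono hsubI))))
    have hv'int : IntervalIntegrable (fun y => Complex.I * (s' y : ℂ)) volume a t := by
      apply ContinuousOn.intervalIntegrable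
      rw [huIcc]
      exact continuousOn_const.mul
        (Complex.continuous_ofReal.comp_continuousOn (hs'cont.mono hsubI))
    have hgh'int : IntervalIntegrable (fun y => g y * (Complex.I * (s' y : ℂ))) volume a t := by
      apply ContinuousOn.intervalIntegrable
      rw [huIcc]
      exact (hgcont.mono hsubI).mul (continuousOn_const.mul
        (Complex.continuous_ofReal.comp_continuousOn (hs'cont.mono hsubI)))
    have hs'int : IntervalIntegrable s' volume a t :=
      ContinuousOn.intervalIntegrable (by rw [huIcc]; exact hs'cont.mono hsubI)
    have hparts := intervalIntegral.integral_deriv_mul_eq_sub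
      (u := g) (v := fun y => Complex.I * (s y : ℂ))
      (u' := fun y => g y * (Complex.I * ((lam * φ' y : ℝ) : ℂ)))
      (v' := fun y => Complex.I * (s' y : ℂ))
      (fun x hx => hgd x (hUsub (hmemI x hx)))
      (fun x hx => hhd x (hmemI x hx)) hu'int hv'int
    have hid : ∀ x ∈ Set.Icc a b,
        g x * (Complex.I * ((lam * φ' x : ℝ) : ℂ)) * (Complex.I * (s x : ℂ)) = g x := by
      intro x hx
      have hne : ((lam : ℂ) * (φ' x : ℂ)) ≠ 0 := by
        have := hlamφ'ne x hx
        exact_mod_cast (by push_cast; exact_mod_cast this : ((lam * φ' x : ℝ) : ℂ) ≠ 0)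
      rw [hsdef]
      push_cast
      field_simp
      ring_nf
      rw [Complex.I_sq]
      ring_nf
      rw [mul_right_comm (g x * (lam : ℂ)) ((φ' x : ℝ) : ℂ) (lam : ℂ)⁻¹,
        mul_inv_cancel_right₀ (left_ne_zero_of_mul hne), mul_inv_cancel_right₀ (right_ne_zero_of_mul hne)]
    have heq : (∫ x in a..t, (g x + g x * (Complex.I * (s' x : ℂ)))) =
        g t * (Complex.I * (s t : ℂ)) - g a * (Complex.I * (s a : ℂ)) := by
      rw [← hparts]
      apply intervalIntegral.integral_congr
      intro x hx
      simp only
      rw [hid x (hmemI x hx)]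
    have hsplit : (∫ x in a..t, g x) =
        (g t * (Complex.I * (s t : ℂ)) - g a * (Complex.I * (s a : ℂ))) -
          ∫ x in a..t, g x * (Complex.I * (s' x : ℂ)) := by
      rw [← heq, intervalIntegral.integral_add hgint hgh'int]
      ring
    have hnorm_gs : ∀ x ∈ Set.Icc a b, ‖g x * (Complex.I * (s x : ℂ))‖ ≤ M := by
      intro x hx
      rw [norm_mul, norm_mul, hgnorm, Complex.norm_I, Complex.norm_real, one_mul, one_mul]
      exact hsM x hx
    have hFTC : (∫ x in a..t, s' x) = s t - s a :=
      intervalIntegral.integral_eq_sub_of_hasDerivAt (fun x hx => hsd x (hmemI x hx)) hs'int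
    have hae_ne : ∀ᵐ x : ℝ, x ≠ t := by
      rw [MeasureTheory.ae_iff]
      have he : {x : ℝ | ¬x ≠ t} = {t} := by ext y; simp
      rw [he]
      exact measure_singleton t
    have habs_cong : (∫ x in a..t, ‖g x * (Complex.I * (s' x : ℂ))‖) =
        ∫ x in a..t, ε * s' x := by
      apply intervalIntegral.integral_congr_ae
      filter_upwards [hae_ne] with x hxt hx
      rw [Set.uIoc_of_le hat] at hx
      have hxo : x ∈ Set.Ioo a b := ⟨hx.1, lt_of_lt_of_le (lt_of_le_of_ne hx.2 hxt) ht.2⟩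
      have hxm : x ∈ Set.Icc a b := Set.Ioo_subset_Icc_self hxo
      rw [norm_mul, norm_mul, hgnorm, Complex.norm_I, Complex.norm_real, one_mul, one_mul]
      have hsq : 0 < (lam * φ' x) ^ 2 := pow_two_pos_of_ne_zero (hlamφ'ne x hxm)
      have hs'sign : 0 ≤ ε * s' x := by
        rw [hs'def]
        simp only
        rw [mul_div_assoc']
        apply div_nonneg _ hsq.le
        have h1 : 0 ≤ ε * D2 x := hεD x hxo
        nlinarith
      calc |s' x| = |ε| * |s' x| := by rw [hε1, one_mul]
        _ = |ε * s' x| := (abs_mul ε (s' x)).symm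
        _ = ε * s' x := abs_of_nonneg hs'sign
    have herr : ‖∫ x in a..t, g x * (Complex.I * (s' x : ℂ))‖ ≤ M := by
      calc ‖∫ x in a..t, g x * (Complex.I * (s' x : ℂ))‖
          ≤ ∫ x in a..t, ‖g x * (Complex.I * (s' x : ℂ))‖ :=
            intervalIntegral.norm_integral_le_integral_norm hat
        _ = ∫ x in a..t, ε * s' x := habs_cong
        _ = ε * (s t - s a) := by rw [intervalIntegral.integral_const_mul, hFTC]
        _ ≤ |ε * (s t - s a)| := le_abs_self _
        _ = |s t - s a| := by rw [abs_mul, hε1, one_mul]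
        _ ≤ M := hsdiff t ht a (Set.left_mem_Icc.mpr hab')
    calc ‖∫ x in a..t, g x‖
        ≤ ‖g t * (Complex.I * (s t : ℂ)) - g a * (Complex.I * (s a : ℂ))‖ +
          ‖∫ x in a..t, g x * (Complex.I * (s' x : ℂ))‖ := by rw [hsplit]; exact norm_sub_le _ _
      _ ≤ (‖g t * (Complex.I * (s t : ℂ))‖ + ‖g a * (Complex.I * (s a : ℂ))‖) +
          ‖∫ x in a..t, g x * (Complex.I * (s' x : ℂ))‖ :=
            add_le_add (norm_sub_le _ _) le_rfl
      _ ≤ (M + M) + M := by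
          gcongr
          · exact hnorm_gs t ht
          · exact hnorm_gs a (Set.left_mem_Icc.mpr hab')
      _ = 3 * M := by ring
  -- Step B: summation by parts with ψ
  set F : ℝ → ℂ := fun t => ∫ x in a..t, g x with hFdef
  have hFd : ∀ x ∈ Set.Icc a b, HasDerivAt F (g x) x := by
    intro x hx
    have hint : IntervalIntegrable g volume a x :=
      ContinuousOn.intervalIntegrable
        (by rw [Set.uIcc_of_le hx.1]; exact hgcont.mono (Set.Icc_subset_Icc le_rfl hx.2))
    have hmeas : StronglyMeasurableAtFilter g (nhds x) volume :=
      ⟨U, hU.mem_nhds (hUsub hx), hgcontU.aestronglyMeasurable hU.measurableSet⟩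
    exact (intervalIntegral.integral_hasStrictDerivAt_right hint hmeas
      (hgcontU.continuousAt (hU.mem_nhds (hUsub hx)))).hasDerivAt
  have hFcont : ContinuousOn F (Set.Icc a b) :=
    fun x hx => ((hFd x hx).continuousAt).continuousWithinAt
  have hψd : ∀ x ∈ Set.Ioo a b, HasDerivAt ψ (ψ' x) x := by
    intro x hx
    have h1 : HasDerivWithinAt ψ (ψ' x) (Set.Icc a b) x :=
      ((hψ.differentiableOn one_ne_zero) x (Set.Ioo_subset_Icc_self hx)).hasDerivWithinAt
    exact h1.hasDerivAt (Icc_mem_nhds hx.1 hx.2)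
  have hψ'cont : ContinuousOn ψ' (Set.Icc a b) :=
    hψ.continuousOn_derivWithin (uniqueDiffOn_Icc hab) le_rfl
  have hψcont : ContinuousOn ψ (Set.Icc a b) := hψ.continuousOn
  have huIab : Set.uIcc a b = Set.Icc a b := Set.uIcc_of_le hab'
  have hgint : IntervalIntegrable g volume a b :=
    ContinuousOn.intervalIntegrable (by rw [huIab]; exact hgcont)
  have hψ'int : IntervalIntegrable ψ' volume a b :=
    ContinuousOn.intervalIntegrable (by rw [huIab]; exact hψ'cont)
  have hgψint : IntervalIntegrable (fun x => g x * ψ x) volume a b :=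
    ContinuousOn.intervalIntegrable (by rw [huIab]; exact hgcont.mul hψcont)
  have hFψ'int : IntervalIntegrable (fun x => F x * ψ' x) volume a b :=
    ContinuousOn.intervalIntegrable (by rw [huIab]; exact hFcont.mul hψ'cont)
  have hparts := intervalIntegral.integral_deriv_mul_eq_sub_of_hasDeriv_right
    (u := F) (v := ψ) (u' := g) (v' := ψ')
    (by rw [huIab]; exact hFcont) (by rw [huIab]; exact hψcont)
    (by
      rw [min_eq_left hab', max_eq_right hab']
      exact fun x hx => ((hFd x (Set.Ioo_subset_Icc_self hx)).hasDerivWithinAt))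
    (by
      rw [min_eq_left hab', max_eq_right hab']
      exact fun x hx => ((hψd x hx).hasDerivWithinAt))
    hgint hψ'int
  have hFa : F a = 0 := intervalIntegral.integral_same
  have hsplit : (∫ x in a..b, g x * ψ x) = F b * ψ b - ∫ x in a..b, F x * ψ' x := by
    have h1 := intervalIntegral.integral_add hgψint hFψ'int
    rw [h1, hFa, zero_mul, sub_zero] at hparts
    linear_combination hparts
  have hbmem : b ∈ Set.Icc a b := Set.right_mem_Icc.mpr hab'
  have hnormi : IntervalIntegrable (fun x => ‖F x * ψ' x‖) volume a b := hFψ'int.norm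
  have hnormi2 : IntervalIntegrable (fun x => 3 * M * ‖ψ' x‖) volume a b :=
    (hψ'int.norm).const_mul (3 * M)
  show ‖∫ x in a..b, g x * ψ x‖ ≤ 3 * M * (‖ψ b‖ + ∫ x in a..b, ‖ψ' x‖)
  calc ‖∫ x in a..b, g x * ψ x‖
      = ‖F b * ψ b - ∫ x in a..b, F x * ψ' x‖ := by rw [hsplit]
    _ ≤ ‖F b * ψ b‖ + ‖∫ x in a..b, F x * ψ' x‖ := norm_sub_le _ _
    _ ≤ 3 * M * ‖ψ b‖ + ∫ x in a..b, ‖F x * ψ' x‖ := by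
        refine add_le_add ?_ (intervalIntegral.norm_integral_le_integral_norm hab')
        rw [norm_mul]
        exact mul_le_mul_of_nonneg_right (hFbound b hbmem) (norm_nonneg _)
    _ ≤ 3 * M * ‖ψ b‖ + ∫ x in a..b, 3 * M * ‖ψ' x‖ := by
        refine add_le_add le_rfl ?_
        refine intervalIntegral.integral_mono_on hab' hnormi hnormi2 ?_
        intro x hx
        rw [norm_mul]
        exact mul_le_mul_of_nonneg_right (hFbound x hx) (norm_nonneg _)
    _ = 3 * M * (‖ψ b‖ + ∫ x in a..b, ‖ψ' x‖) := by
        rw [intervalIntegral.integral_const_mul]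
        ring
end

section
/- Let d ≥ 2, μ ≥ 0, and let f(η) = √(|η|² + μ²), defined for η ∈ ℝ^d with |η|² + μ² > 0. Fix j ∈ {1,...,d} and let M(η) be the (d−1)×(d−1) matrix obtained from the Hessian of f at η by deleting the j-th row and j-th column, i.e. M(η) = (∂²f/∂η_k∂η_l(η))_{k,l ≠ j}. Then det M(η) = (η_j² + μ²)(|η|² + μ²)^{−(d+1)/2}. In particular, for any 0 < ε ≤ R and μ ∈ [0,1], one has det M(η) ≥ ε² (R² + 1)^{−(d+1)/2} whenever |η_j| ≥ ε and |η| ≤ R. -/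
/-!
The gradient of `f = √(|η|² + μ²)` is `η / f`, so its Hessian is `f⁻¹ (I - f⁻² η ηᵀ)`. Deleting
the `j`-th row and column leaves `f⁻¹ (I - f⁻² v vᵀ)` with `v = η^{(j)}`, and the matrix
determinant lemma gives `f^{-(d-1)} (1 - |v|² / f²) = (η_j² + μ²) f^{-(d+1)}`. The lower bound
follows from `η_j² + μ² ≥ ε²`, `f² ≤ R² + 1` and the negativity of the exponent.
-/

/-- The Hessian matrix of `f(η) = √(|η|² + μ²)` at `η`. -/
noncomputable def hessKG {d : ℕ} (μ : ℝ) (η : Fin d → ℝ) : Matrix (Fin d) (Fin d) ℝ :=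
  Matrix.of fun k l =>
    fderiv ℝ
      (fun η' : Fin d → ℝ =>
        fderiv ℝ (fun η'' : Fin d → ℝ => Real.sqrt ((∑ i, η'' i ^ 2) + μ ^ 2)) η'
          (Pi.single l 1))
      η (Pi.single k 1)

/-- The `(d-1)×(d-1)` submatrix of the Hessian of `f(η) = √(|η|² + μ²)` obtained by
deleting the `j`-th row and `j`-th column. -/
noncomputable def hessKGsub {d : ℕ} (μ : ℝ) (η : Fin d → ℝ) (j : Fin d) :
    Matrix {k : Fin d // k ≠ j} {k : Fin d // k ≠ j} ℝ :=
  Matrix.of fun k l => hessKG μ η (k : Fin d) (l : Fin d)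

open Real

section Calculus

variable {ι : Type*} [Fintype ι]

lemma sum_smul_proj_apply_single [DecidableEq ι] (c : ι → ℝ) (k : ι) :
    (∑ i, c i • (ContinuousLinearMap.proj i : (ι → ℝ) →L[ℝ] ℝ)) (Pi.single k 1) = c k := by
  simp [Pi.single_apply]

lemma hasFDerivAt_sum_sq_add (c : ℝ) (x : ι → ℝ) :
    HasFDerivAt (fun y : ι → ℝ => (∑ i, y i ^ 2) + c)
      (∑ i, (2 * x i) • (ContinuousLinearMap.proj i : (ι → ℝ) →L[ℝ] ℝ)) x := by
  refine (HasFDerivAt.fun_sum fun i _ => ?_).add_const c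
  simpa using
    ((ContinuousLinearMap.proj (R := ℝ) (φ := fun _ : ι => ℝ) i).hasFDerivAt (x := x)).pow 2

lemma hasFDerivAt_sqrt_sum_sq_add {c : ℝ} {x : ι → ℝ} (hx : 0 < (∑ i, x i ^ 2) + c) :
    HasFDerivAt (fun y : ι → ℝ => √((∑ i, y i ^ 2) + c))
      ((1 / (2 * √((∑ i, x i ^ 2) + c))) •
        ∑ i, (2 * x i) • (ContinuousLinearMap.proj i : (ι → ℝ) →L[ℝ] ℝ)) x :=
  (hasFDerivAt_sum_sq_add c x).sqrt hx.ne'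

variable [DecidableEq ι]

lemma fderiv_sqrt_sum_sq_add_apply_single {c : ℝ} {x : ι → ℝ} (hx : 0 < (∑ i, x i ^ 2) + c)
    (l : ι) :
    fderiv ℝ (fun y : ι → ℝ => √((∑ i, y i ^ 2) + c)) x (Pi.single l 1) =
      x l * (√((∑ i, x i ^ 2) + c))⁻¹ := by
  have hs : √((∑ i, x i ^ 2) + c) ≠ 0 := (sqrt_pos.2 hx).ne'
  rw [(hasFDerivAt_sqrt_sum_sq_add hx).fderiv, _root_.smul_apply,
    sum_smul_proj_apply_single, smul_eq_mul]
  field_simp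

lemma fderiv_fderiv_sqrt_sum_sq_add_apply_single {c : ℝ} {x : ι → ℝ}
    (hx : 0 < (∑ i, x i ^ 2) + c) (k l : ι) :
    fderiv ℝ (fun y : ι → ℝ =>
        fderiv ℝ (fun z : ι → ℝ => √((∑ i, z i ^ 2) + c)) y (Pi.single l 1)) x (Pi.single k 1) =
      (√((∑ i, x i ^ 2) + c))⁻¹ *
        ((if k = l then 1 else 0) - ((∑ i, x i ^ 2) + c)⁻¹ * (x k * x l)) := by
  have hcont : ContinuousAt (fun y : ι → ℝ => (∑ i, y i ^ 2) + c) x :=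
    (hasFDerivAt_sum_sq_add c x).continuousAt
  have hgrad : (fun y : ι → ℝ =>
      fderiv ℝ (fun z : ι → ℝ => √((∑ i, z i ^ 2) + c)) y (Pi.single l 1)) =ᶠ[nhds x]
        fun y => y l * (√((∑ i, y i ^ 2) + c))⁻¹ := by
    filter_upwards [continuousAt_const.eventually_lt hcont hx] with y hy
    exact fderiv_sqrt_sum_sq_add_apply_single hy l
  have hs : √((∑ i, x i ^ 2) + c) ≠ 0 := (sqrt_pos.2 hx).ne'
  have hderiv : HasFDerivAt (fun y : ι → ℝ => y l * (√((∑ i, y i ^ 2) + c))⁻¹) _ x :=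
    ((ContinuousLinearMap.proj (R := ℝ) (φ := fun _ : ι => ℝ) l).hasFDerivAt
    (x := x)).fun_mul ((hasDerivAt_inv hs).comp_hasFDerivAt x (hasFDerivAt_sqrt_sum_sq_add hx))
  rw [hgrad.fderiv_eq, hderiv.fderiv]
  simp only [_root_.add_apply, _root_.smul_apply, sum_smul_proj_apply_single,
    ContinuousLinearMap.proj_apply, smul_eq_mul, sq_sqrt hx.le]
  rcases eq_or_ne k l with rfl | hkl
  · simp only [Pi.single_eq_same, if_true]
    field_simp
    ring
  · simp only [Pi.single_eq_of_ne' hkl, if_neg hkl]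
    field_simp
    ring

end Calculus

lemma inv_sqrt_pow_mul_inv {Q : ℝ} (hQ : 0 < Q) {d : ℕ} (hd : 1 ≤ d) :
    (√Q)⁻¹ ^ (d - 1) * Q⁻¹ = Q ^ (-((d : ℝ) + 1) / 2) := by
  rw [sqrt_eq_rpow, ← rpow_neg hQ.le, ← rpow_natCast, ← rpow_mul hQ.le, ← rpow_neg_one,
    ← rpow_add hQ]
  congr 1
  push_cast [Nat.cast_sub hd]
  ring

section Determinant

open Matrix

lemma det_one_add_vecMulVec {R n : Type*} [CommRing R] [Fintype n] [DecidableEq n]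
    (u v : n → R) : det (1 + vecMulVec u v) = 1 + v ⬝ᵥ u := by
  rw [vecMulVec_eq Unit, det_one_add_replicateCol_mul_replicateRow]

variable {d : ℕ} {μ : ℝ} {η : Fin d → ℝ}

lemma hessKG_eq (hQ : 0 < (∑ i, η i ^ 2) + μ ^ 2) :
    hessKG μ η = (√((∑ i, η i ^ 2) + μ ^ 2))⁻¹ •
      (1 - ((∑ i, η i ^ 2) + μ ^ 2)⁻¹ • vecMulVec η η) := by
  ext k l
  simp only [hessKG, of_apply, fderiv_fderiv_sqrt_sum_sq_add_apply_single hQ, Matrix.smul_apply,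
    Matrix.sub_apply, one_apply, vecMulVec_apply, smul_eq_mul]

lemma hessKGsub_det (hQ : 0 < (∑ i, η i ^ 2) + μ ^ 2) (j : Fin d) :
    (hessKGsub μ η j).det =
      (η j ^ 2 + μ ^ 2) * ((∑ i, η i ^ 2) + μ ^ 2) ^ (-((d : ℝ) + 1) / 2) := by
  set v : {k : Fin d // k ≠ j} → ℝ := fun k => η k
  have hsub : hessKGsub μ η j = (√((∑ i, η i ^ 2) + μ ^ 2))⁻¹ •
      (1 + vecMulVec (-((∑ i, η i ^ 2) + μ ^ 2)⁻¹ • v) v) := by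
    ext k l
    simp only [hessKGsub, of_apply, hessKG_eq hQ, Matrix.smul_apply, Matrix.sub_apply,
      Matrix.add_apply, one_apply, vecMulVec_apply, Subtype.ext_iff, Pi.smul_apply, v]
    ring
  have hcard : Fintype.card {k : Fin d // k ≠ j} = d - 1 := by simp
  have hdot : v ⬝ᵥ v = (∑ i, η i ^ 2) - η j ^ 2 := by
    rw [Fintype.sum_eq_add_sum_subtype_ne (fun i => η i ^ 2) j]
    simp [dotProduct, v, sq]
  rw [hsub, det_smul, det_one_add_vecMulVec, hcard, dotProduct_smul, hdot, smul_eq_mul,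
    ← inv_sqrt_pow_mul_inv hQ (Fin.pos j)]
  field_simp
  ring

end Determinant

theorem stmt_8_general (d : ℕ) (μ : ℝ) (hμ : 0 ≤ μ) (η : Fin d → ℝ)
    (hQ : 0 < (∑ i, η i ^ 2) + μ ^ 2) (j : Fin d) :
    (hessKGsub μ η j).det =
        (η j ^ 2 + μ ^ 2) * ((∑ i, η i ^ 2) + μ ^ 2) ^ (-((d : ℝ) + 1) / 2) ∧
      ∀ ε R : ℝ, 0 < ε → ε ≤ R → μ ≤ 1 → ε ≤ |η j| → Real.sqrt (∑ i, η i ^ 2) ≤ R →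
        ε ^ 2 * (R ^ 2 + 1) ^ (-((d : ℝ) + 1) / 2) ≤ (hessKGsub μ η j).det := by
  refine ⟨hessKGsub_det hQ j, fun ε R hε _ hμ1 hεj hR => ?_⟩
  have hnum : ε ^ 2 ≤ η j ^ 2 + μ ^ 2 := by
    have := pow_le_pow_left₀ hε.le hεj 2
    rw [sq_abs] at this
    linarith [sq_nonneg μ]
  have hden : (∑ i, η i ^ 2) + μ ^ 2 ≤ R ^ 2 + 1 :=
    add_le_add (sqrt_le_iff.1 hR).2 (pow_le_one₀ hμ hμ1)
  rw [hessKGsub_det hQ j]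
  exact mul_le_mul hnum (rpow_le_rpow_of_nonpos hQ hden (by linarith [d.cast_nonneg (α := ℝ)]))
    (by positivity) (by positivity)

/-- **Reduced Hessian determinant of the Klein–Gordon symbol.** For `f(η) = √(|η|² + μ²)`
with `|η|² + μ² > 0`, the submatrix `M(η)` of the Hessian in the variables `η^{(j)}`
satisfies `det M(η) = (η_j² + μ²)(|η|² + μ²)^{-(d+1)/2}`; in particular, for `0 < ε ≤ R`
and `μ ∈ [0,1]`, `det M(η) ≥ ε² (R² + 1)^{-(d+1)/2}` whenever `|η_j| ≥ ε` and `|η| ≤ R`. -/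
theorem stmt_8 (d : ℕ) (hd : 2 ≤ d) (μ : ℝ) (hμ : 0 ≤ μ) (η : Fin d → ℝ)
    (hQ : 0 < (∑ i, η i ^ 2) + μ ^ 2) (j : Fin d) :
    (hessKGsub μ η j).det =
        (η j ^ 2 + μ ^ 2) * ((∑ i, η i ^ 2) + μ ^ 2) ^ (-((d : ℝ) + 1) / 2) ∧
      ∀ ε R : ℝ, 0 < ε → ε ≤ R → μ ≤ 1 → ε ≤ |η j| → Real.sqrt (∑ i, η i ^ 2) ≤ R →
        ε ^ 2 * (R ^ 2 + 1) ^ (-((d : ℝ) + 1) / 2) ≤ (hessKGsub μ η j).det :=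
  stmt_8_general d μ hμ η hQ j
end

section
/- Let d ≥ 2, μ ≥ 0, η ∈ ℝ^d with |η|² + μ² > 0, and f(η) = √(|η|² + μ²). Fix j ∈ {1,...,d}, write η^{(j)} = (η_1,...,η_{j−1},η_{j+1},...,η_d) ∈ ℝ^{d−1}, and let M(η) = (∂²f/∂η_k∂η_l(η))_{k,l ≠ j} be the corresponding (d−1)×(d−1) submatrix of the Hessian of f. Then η^{(j)} is an eigenvector of M(η): M(η) η^{(j)} = ((η_j² + μ²)(|η|² + μ²)^{−3/2}) η^{(j)}. -/
/-!
Since `∂_l f = η_l / f`, the Hessian of `f = √(|η|² + μ²)` is `(δ_kl - η_k η_l / f²) / f`.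
Applied to `η^{(j)}`, the `k`-th row gives `η_k / f - η_k (|η|² - η_j²) / f³ = η_k (η_j² + μ²) / f³`.
-/

open Finset Topology

theorem Matrix.mulVec_submatrix_ne_apply {n α : Type*} [Fintype n] [DecidableEq n]
    [NonUnitalNonAssocSemiring α] (A : Matrix n n α) (v : n → α) (j : n) (k : {k // k ≠ j}) :
    (A.submatrix (↑) (↑) : Matrix {k // k ≠ j} {k // k ≠ j} α).mulVec (fun l => v l) k =
      ∑ l ∈ univ.erase j, A k l * v l :=
  (sum_subtype _ (fun _ => by simp) fun l => A k l * v l).symm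

theorem Real.rpow_neg_three_halves {x : ℝ} (hx : 0 ≤ x) :
    x ^ (-(3 : ℝ) / 2) = (√x * x)⁻¹ := by
  rw [show -(3 : ℝ) / 2 = -(1 / 2 + 1) by norm_num, Real.rpow_neg hx,
    Real.rpow_add' hx (by norm_num), Real.rpow_one, ← Real.sqrt_eq_rpow]

section KleinGordon

variable {d : ℕ} (μ : ℝ)

theorem differentiableAt_sqrt_sum_sq_add {η : Fin d → ℝ} (hQ : 0 < (∑ i, η i ^ 2) + μ ^ 2) :
    DifferentiableAt ℝ (fun η' : Fin d → ℝ => √((∑ i, η' i ^ 2) + μ ^ 2)) η := by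
  fun_prop (disch := exact hQ.ne')

theorem fderiv_sqrt_sum_sq_add_single {η : Fin d → ℝ} (hQ : 0 < (∑ i, η i ^ 2) + μ ^ 2)
    (l : Fin d) :
    fderiv ℝ (fun η' : Fin d → ℝ => √((∑ i, η' i ^ 2) + μ ^ 2)) η (Pi.single l 1) =
      η l / √((∑ i, η i ^ 2) + μ ^ 2) := by
  have hsum : HasFDerivAt (fun η' : Fin d → ℝ => (∑ i, η' i ^ 2) + μ ^ 2)
      (∑ i, (2 • η i ^ (2 - 1)) • (ContinuousLinearMap.proj i : (Fin d → ℝ) →L[ℝ] ℝ)) η :=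
    (HasFDerivAt.fun_sum fun i _ => (hasFDerivAt_apply i η).pow 2).add_const _
  rw [(hsum.sqrt hQ.ne').fderiv]
  simp [Pi.single_apply]
  ring

theorem hessKG_apply {η : Fin d → ℝ} (hQ : 0 < (∑ i, η i ^ 2) + μ ^ 2) (k l : Fin d) :
    hessKG μ η k l = (if k = l then 1 else 0) / √((∑ i, η i ^ 2) + μ ^ 2) -
      η k * η l / (√((∑ i, η i ^ 2) + μ ^ 2) * ((∑ i, η i ^ 2) + μ ^ 2)) := by
  have hs : √((∑ i, η i ^ 2) + μ ^ 2) ≠ 0 := by positivity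
  have hpartial : (fun η' : Fin d → ℝ =>
      fderiv ℝ (fun η'' : Fin d → ℝ => √((∑ i, η'' i ^ 2) + μ ^ 2)) η' (Pi.single l 1)) =ᶠ[𝓝 η]
        fun η' => η' l * (√((∑ i, η' i ^ 2) + μ ^ 2))⁻¹ := by
    have hopen : IsOpen {η' : Fin d → ℝ | 0 < (∑ i, η' i ^ 2) + μ ^ 2} :=
      isOpen_lt continuous_const (by fun_prop)
    filter_upwards [hopen.mem_nhds hQ] with η' hη'
    rw [fderiv_sqrt_sum_sq_add_single μ hη', div_eq_mul_inv]
  have hderiv : HasFDerivAt (fun η' : Fin d → ℝ => η' l * (√((∑ i, η' i ^ 2) + μ ^ 2))⁻¹) _ η :=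
    (hasFDerivAt_apply l η).fun_mul ((hasDerivAt_inv hs).comp_hasFDerivAt η
      (differentiableAt_sqrt_sum_sq_add μ hQ).hasFDerivAt)
  rw [hessKG, Matrix.of_apply, hpartial.fderiv_eq, hderiv.fderiv]
  simp only [add_apply, smul_apply,
    fderiv_sqrt_sum_sq_add_single μ hQ, ContinuousLinearMap.proj_apply, Pi.single_apply,
    smul_eq_mul, Real.sq_sqrt hQ.le, eq_comm (a := l)]
  split_ifs <;> field_simp <;> ring

theorem sum_erase_hessKG_mul {η : Fin d → ℝ} (hQ : 0 < (∑ i, η i ^ 2) + μ ^ 2) {j k : Fin d}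
    (hk : k ≠ j) :
    ∑ l ∈ univ.erase j, hessKG μ η k l * η l =
      η k * (η j ^ 2 + μ ^ 2) / (√((∑ i, η i ^ 2) + μ ^ 2) * ((∑ i, η i ^ 2) + μ ^ 2)) := by
  have hsq : ∑ l ∈ univ.erase j, η l ^ 2 = (∑ i, η i ^ 2) - η j ^ 2 :=
    eq_sub_of_add_eq (sum_erase_add _ _ (mem_univ j))
  simp only [hessKG_apply μ hQ, sub_mul, sum_sub_distrib, ite_div, ite_mul, zero_div, zero_mul,
    sum_ite_eq, mem_erase, ne_eq, hk, not_false_eq_true, and_true, mem_univ, if_true]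
  have hs : √((∑ i, η i ^ 2) + μ ^ 2) ≠ 0 := by positivity
  simp only [div_mul_eq_mul_div, mul_assoc, ← pow_two, ← sum_div, ← mul_sum, hsq]
  field_simp
  ring

end KleinGordon

theorem stmt_9_general (d : ℕ) (μ : ℝ) (η : Fin d → ℝ)
    (hQ : 0 < (∑ i, η i ^ 2) + μ ^ 2) (j : Fin d) :
    (hessKGsub μ η j).mulVec (fun k => η (k : Fin d)) =
      ((η j ^ 2 + μ ^ 2) * ((∑ i, η i ^ 2) + μ ^ 2) ^ (-(3 : ℝ) / 2)) •
        fun k : {k : Fin d // k ≠ j} => η (k : Fin d) := by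
  funext k
  rw [hessKGsub, ← Matrix.submatrix, Matrix.mulVec_submatrix_ne_apply,
    sum_erase_hessKG_mul μ hQ k.2, Real.rpow_neg_three_halves hQ.le, Pi.smul_apply, smul_eq_mul]
  ring

/-- **Eigenvector identity for the reduced Hessian of the Klein–Gordon symbol**:
`η^{(j)}` is an eigenvector of `M(η)` with eigenvalue `(η_j² + μ²)(|η|² + μ²)^{-3/2}`. -/
theorem stmt_9 (d : ℕ) (hd : 2 ≤ d) (μ : ℝ) (hμ : 0 ≤ μ) (η : Fin d → ℝ)
    (hQ : 0 < (∑ i, η i ^ 2) + μ ^ 2) (j : Fin d) :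
    (hessKGsub μ η j).mulVec (fun k => η (k : Fin d)) =
      ((η j ^ 2 + μ ^ 2) * ((∑ i, η i ^ 2) + μ ^ 2) ^ (-(3 : ℝ) / 2)) •
        fun k : {k : Fin d // k ≠ j} => η (k : Fin d) :=
  stmt_9_general d μ η hQ j
end
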